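/- General closed form with L missing points (Proposition 1): with 𝒮₁ = ∅, 𝒮₂ = {u₁}, …, 𝒮_{L+1} = {u₁,…,u_L}, the density of s_{n+1} conditional on the observed data s_{(1:n)\𝒮_{L+1}}, obtained by integrating out s_{u₁},…,s_{u_L} from the product of the one-step conditional densities, equals Σ_{i∈(1:n)\𝒮_{L+1}} w_θ(i,n+1) κ₂(s − sᵢ, h̲) + Σ_{m=1}^{L} Σ_{1≤i₁<⋯<i_m≤L} w_θ(u_{i₁},u_{i₂})⋯w_θ(u_{i_{m−1}},u_{i_m})·w_θ(u_{i_m},n+1) · Σ_{j∈(1:u_{i₁}−1)\𝒮_{i₁}} w_θ(j,u_{i₁}) κ₂(s − s_j, √(m+1)·h̲). -/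

import Mathlib

open MeasureTheory Real

/-- Univariate centered Gaussian density with standard deviation `σ`. -/
noncomputable def gauss1 (σ x : ℝ) : ℝ :=
  (1 / (Real.sqrt (2 * Real.pi) * σ)) * Real.exp (-(x ^ 2) / (2 * σ ^ 2))

/-- Bivariate product Gaussian kernel `κ₂(z, h)`. -/
noncomputable def kernel2 (z h : ℝ × ℝ) : ℝ := gauss1 h.1 z.1 * gauss1 h.2 z.2

/-- The density of the location at time `m`, conditional on the data `σ` with the locations
at times `u 1 < u 2 < ⋯ < u l` unobserved, obtained by recursively integrating out the
missing locations from the one-step conditional (weighted kernel) densities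
`f_Θ(s_m | s_{1:(m−1)}) = Σ_{i=1}^{m−1} w(i,m) κ₂(s_m − sᵢ, h̲)` (equation (3) of the paper). -/
noncomputable def condDens (w : ℕ → ℕ → ℝ) (hb : ℝ × ℝ) (u : ℕ → ℕ) :
    ℕ → (ℕ → ℝ × ℝ) → ℕ → (ℝ × ℝ) → ℝ
  | 0, σ, m, s => ∑ i ∈ Finset.Icc 1 (m - 1), w i m * kernel2 (s - σ i) hb
  | l + 1, σ, m, s =>
      ∫ z : ℝ × ℝ,
        condDens w hb u l (Function.update σ (u (l + 1)) z) m s *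
          condDens w hb u l σ (u (l + 1)) z

/-!
Induction on the number `l` of missing points. Integrating out `z = s_{u_{l+1}}`, the density
of `s_m` with `l` points missing is affine in `z`: only the kernel `w(u_{l+1},m) κ₂(s − z, h̲)`
sees it. The density of `s_{u_{l+1}}` (again with `l` points missing) integrates to one, and
convolving it with `κ₂(·, h̲)` turns every bandwidth `√(k+1)·h̲` into `√(k+2)·h̲`, since Gaussian
convolution adds variances. The terms so produced are exactly those of the chains of missing
points that end at `u_{l+1}`.
-/

lemma gauss1_eq_mul_exp (σ x : ℝ) :
    gauss1 σ x = 1 / (√(2 * π) * σ) * exp (-(1 / (2 * σ ^ 2)) * x ^ 2) := by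
  rw [gauss1]
  congr 2
  ring

lemma integrable_gauss1 {σ : ℝ} (hσ : 0 < σ) : Integrable (gauss1 σ) := by
  simp only [funext (gauss1_eq_mul_exp σ)]
  exact (integrable_exp_neg_mul_sq (by positivity)).const_mul _

lemma integral_gauss1 {σ : ℝ} (hσ : 0 < σ) : ∫ x, gauss1 σ x = 1 := by
  have hvar : π / (1 / (2 * σ ^ 2)) = 2 * π * σ ^ 2 := by field_simp
  simp only [gauss1_eq_mul_exp]
  rw [integral_const_mul, integral_gaussian, hvar, sqrt_mul (by positivity) (σ ^ 2),
    sqrt_sq hσ.le]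
  field_simp

/-- Completing the square in `z`. -/
lemma gauss1_mul_gauss1 {a b : ℝ} (ha : 0 < a) (hb : 0 < b) (x y z : ℝ) :
    gauss1 a (x - z) * gauss1 b (z - y) =
      gauss1 √(a ^ 2 + b ^ 2) (x - y) *
        gauss1 (a * b / √(a ^ 2 + b ^ 2)) (z - (b ^ 2 * x + a ^ 2 * y) / (a ^ 2 + b ^ 2)) := by
  have hab : 0 < a ^ 2 + b ^ 2 := by positivity
  have hc : 0 < √(a ^ 2 + b ^ 2) := sqrt_pos.mpr hab
  have hc2 : √(a ^ 2 + b ^ 2) ^ 2 = a ^ 2 + b ^ 2 := sq_sqrt hab.le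
  unfold gauss1
  rw [mul_mul_mul_comm, mul_mul_mul_comm (1 / (√(2 * π) * √(a ^ 2 + b ^ 2))), ← exp_add,
    ← exp_add]
  congr 1
  · field_simp
  · congr 1
    rw [div_pow, mul_pow, hc2]
    field_simp
    ring

lemma integrable_gauss1_mul_gauss1 {a b : ℝ} (ha : 0 < a) (hb : 0 < b) (x y : ℝ) :
    Integrable fun z => gauss1 a (x - z) * gauss1 b (z - y) := by
  have hd : 0 < a * b / √(a ^ 2 + b ^ 2) := by positivity
  simp only [gauss1_mul_gauss1 ha hb x y]
  exact ((integrable_gauss1 hd).comp_sub_right _).const_mul _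

lemma integral_gauss1_mul_gauss1 {a b : ℝ} (ha : 0 < a) (hb : 0 < b) (x y : ℝ) :
    ∫ z, gauss1 a (x - z) * gauss1 b (z - y) = gauss1 √(a ^ 2 + b ^ 2) (x - y) := by
  have hd : 0 < a * b / √(a ^ 2 + b ^ 2) := by positivity
  simp only [gauss1_mul_gauss1 ha hb x y]
  rw [integral_const_mul, integral_sub_right_eq_self (gauss1 _), integral_gauss1 hd, mul_one]

noncomputable def convBandwidth (a b : ℝ × ℝ) : ℝ × ℝ :=
  (√(a.1 ^ 2 + b.1 ^ 2), √(a.2 ^ 2 + b.2 ^ 2))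

section Kernel2

variable {a b : ℝ × ℝ}

lemma kernel2_mul_kernel2 (s p z : ℝ × ℝ) :
    kernel2 (s - z) a * kernel2 (z - p) b =
      (gauss1 a.1 (s.1 - z.1) * gauss1 b.1 (z.1 - p.1)) *
        (gauss1 a.2 (s.2 - z.2) * gauss1 b.2 (z.2 - p.2)) := by
  simp only [kernel2, Prod.fst_sub, Prod.snd_sub]
  ring

lemma integrable_kernel2 (hb₁ : 0 < b.1) (hb₂ : 0 < b.2) (p : ℝ × ℝ) :
    Integrable fun z : ℝ × ℝ => kernel2 (z - p) b := by
  rw [Measure.volume_eq_prod]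
  exact ((integrable_gauss1 hb₁).comp_sub_right p.1).mul_prod
    ((integrable_gauss1 hb₂).comp_sub_right p.2)

lemma integral_kernel2 (hb₁ : 0 < b.1) (hb₂ : 0 < b.2) (p : ℝ × ℝ) :
    ∫ z : ℝ × ℝ, kernel2 (z - p) b = 1 := by
  rw [Measure.volume_eq_prod]
  simp only [kernel2, Prod.fst_sub, Prod.snd_sub]
  rw [integral_prod_mul (fun t => gauss1 b.1 (t - p.1)) (fun t => gauss1 b.2 (t - p.2)),
    integral_sub_right_eq_self (gauss1 b.1), integral_sub_right_eq_self (gauss1 b.2),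
    integral_gauss1 hb₁, integral_gauss1 hb₂, mul_one]

lemma integrable_kernel2_mul_kernel2 (ha₁ : 0 < a.1) (ha₂ : 0 < a.2) (hb₁ : 0 < b.1)
    (hb₂ : 0 < b.2) (s p : ℝ × ℝ) :
    Integrable fun z : ℝ × ℝ => kernel2 (s - z) a * kernel2 (z - p) b := by
  simp only [kernel2_mul_kernel2, Measure.volume_eq_prod]
  exact (integrable_gauss1_mul_gauss1 ha₁ hb₁ s.1 p.1).mul_prod
    (integrable_gauss1_mul_gauss1 ha₂ hb₂ s.2 p.2)

lemma integral_kernel2_mul_kernel2 (ha₁ : 0 < a.1) (ha₂ : 0 < a.2) (hb₁ : 0 < b.1)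
    (hb₂ : 0 < b.2) (s p : ℝ × ℝ) :
    ∫ z : ℝ × ℝ, kernel2 (s - z) a * kernel2 (z - p) b =
      kernel2 (s - p) (convBandwidth a b) := by
  simp only [kernel2_mul_kernel2, Measure.volume_eq_prod]
  rw [integral_prod_mul (fun t => gauss1 a.1 (s.1 - t) * gauss1 b.1 (t - p.1))
      (fun t => gauss1 a.2 (s.2 - t) * gauss1 b.2 (t - p.2)),
    integral_gauss1_mul_gauss1 ha₁ hb₁, integral_gauss1_mul_gauss1 ha₂ hb₂]
  rfl

end Kernel2

noncomputable def scaledBandwidth (hb : ℝ × ℝ) (k : ℕ) : ℝ × ℝ := √((k : ℝ) + 1) • hb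

section ScaledBandwidth

variable {hb : ℝ × ℝ}

lemma scaledBandwidth_zero : scaledBandwidth hb 0 = hb := by
  simp [scaledBandwidth]

lemma scaledBandwidth_pos (hb₁ : 0 < hb.1) (hb₂ : 0 < hb.2) (k : ℕ) :
    0 < (scaledBandwidth hb k).1 ∧ 0 < (scaledBandwidth hb k).2 := by
  simp only [scaledBandwidth, Prod.smul_fst, Prod.smul_snd, smul_eq_mul]
  constructor <;> positivity

lemma convBandwidth_scaledBandwidth (hb₁ : 0 ≤ hb.1) (hb₂ : 0 ≤ hb.2) (k : ℕ) :
    convBandwidth hb (scaledBandwidth hb k) = scaledBandwidth hb (k + 1) := by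
  have hsqrt (x : ℝ) (hx : 0 ≤ x) :
      √(x ^ 2 + (√((k : ℝ) + 1) * x) ^ 2) = √(((k + 1 : ℕ) : ℝ) + 1) * x := by
    rw [mul_pow, sq_sqrt (by positivity), ← one_add_mul, sqrt_mul (by positivity), sqrt_sq hx]
    push_cast
    ring_nf
  simp only [convBandwidth, scaledBandwidth, Prod.smul_fst, Prod.smul_snd, smul_eq_mul,
    hsqrt _ hb₁, hsqrt _ hb₂]
  rfl

end ScaledBandwidth

open scoped Classical in
noncomputable def chains (k l : ℕ) : Finset (Fin k → Fin l) :=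
  Finset.univ.filter (fun c : Fin k → Fin l => StrictMono c)

section Chains

variable {k l : ℕ}

@[simp]
lemma mem_chains {c : Fin k → Fin l} : c ∈ chains k l ↔ StrictMono c := by
  simp [chains]

lemma chains_eq_empty (h : l < k) : chains k l = ∅ :=
  Finset.eq_empty_of_forall_notMem fun c hc => by
    have := Fintype.card_le_of_injective c (mem_chains.1 hc).injective
    simp only [Fintype.card_fin] at this
    omega

lemma chains_zero : chains 0 l = {Fin.elim0} := by
  ext c
  simp only [mem_chains, Finset.mem_singleton, Subsingleton.elim c Fin.elim0, iff_true]
  exact fun i => i.elim0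

lemma strictMono_castSucc_comp_iff {c : Fin k → Fin l} :
    StrictMono (Fin.castSucc ∘ c) ↔ StrictMono c :=
  ⟨fun h _ _ hij => Fin.castSucc_lt_castSucc_iff.1 (h hij), Fin.strictMono_castSucc.comp⟩

lemma StrictMono.snoc_last {c : Fin k → Fin l} (hc : StrictMono c) :
    StrictMono (Fin.snoc (Fin.castSucc ∘ c) (Fin.last l) : Fin (k + 1) → Fin (l + 1)) := by
  intro i j hij
  obtain ⟨i, rfl⟩ := Fin.exists_castSucc_eq.2 (Fin.ne_last_of_lt hij)
  induction j using Fin.lastCases with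
  | last =>
    simpa only [Fin.snoc_castSucc, Fin.snoc_last, Function.comp_apply] using
      Fin.castSucc_lt_last (c i)
  | cast j =>
    simpa only [Fin.snoc_castSucc, Function.comp_apply] using
      Fin.castSucc_lt_castSucc_iff.2 (hc (Fin.castSucc_lt_castSucc_iff.1 hij))

variable {M : Type*} [AddCommMonoid M]

lemma sum_chains_castSucc (T : (Fin (k + 1) → Fin (l + 1)) → M) :
    ∑ c ∈ chains (k + 1) l, T (Fin.castSucc ∘ c) =
      ∑ c ∈ (chains (k + 1) (l + 1)).filter (fun c => c (Fin.last k) ≠ Fin.last l), T c := by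
  refine Finset.sum_bij (fun c _ => Fin.castSucc ∘ c) (fun c hc => ?_)
    (fun c _ c' _ h => funext fun i => Fin.castSucc_injective _ (congrFun h i))
    (fun c hc => ?_) (fun _ _ => rfl)
  · simp only [Finset.mem_filter, mem_chains] at hc ⊢
    exact ⟨strictMono_castSucc_comp_iff.2 hc, (Fin.castSucc_lt_last _).ne⟩
  · simp only [Finset.mem_filter, mem_chains] at hc
    obtain ⟨hc, hlast⟩ := hc
    have hne (i : Fin (k + 1)) : c i ≠ Fin.last l :=
      ((hc.monotone (Fin.le_last i)).trans_lt ((Fin.le_last _).lt_of_ne hlast)).ne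
    exact ⟨fun i => (c i).castPred (hne i),
      mem_chains.2 fun i j hij => Fin.castPred_lt_castPred_iff.2 (hc hij),
      funext fun i => Fin.castSucc_castPred _ _⟩

lemma sum_chains_snoc_last (T : (Fin (k + 1) → Fin (l + 1)) → M) :
    ∑ c ∈ chains k l, T (Fin.snoc (Fin.castSucc ∘ c) (Fin.last l)) =
      ∑ c ∈ (chains (k + 1) (l + 1)).filter (fun c => c (Fin.last k) = Fin.last l), T c := by
  refine Finset.sum_bij (fun c _ => Fin.snoc (Fin.castSucc ∘ c) (Fin.last l))
    (fun c hc => ?_) (fun c _ c' _ h => ?_) (fun c hc => ?_) (fun _ _ => rfl)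
  · simp only [Finset.mem_filter, mem_chains, Fin.snoc_last] at hc ⊢
    exact ⟨hc.snoc_last, trivial⟩
  · funext i
    simpa only [Fin.snoc_castSucc, Function.comp_apply, Fin.castSucc_inj]
      using congrFun h i.castSucc
  · simp only [Finset.mem_filter, mem_chains] at hc
    obtain ⟨hc, hlast⟩ := hc
    have hne (i : Fin k) : c i.castSucc ≠ Fin.last l :=
      (hlast ▸ hc (Fin.castSucc_lt_last i)).ne
    refine ⟨fun i => (c i.castSucc).castPred (hne i),
      mem_chains.2 fun i j hij => Fin.castPred_lt_castPred_iff.2 (hc (by simpa)), ?_⟩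
    conv_rhs => rw [← Fin.snoc_init_self c, hlast]
    congr 1

lemma sum_chains_succ_succ (T : (Fin (k + 1) → Fin (l + 1)) → M) :
    ∑ c ∈ chains (k + 1) (l + 1), T c =
      ∑ c ∈ chains (k + 1) l, T (Fin.castSucc ∘ c) +
        ∑ c ∈ chains k l, T (Fin.snoc (Fin.castSucc ∘ c) (Fin.last l)) := by
  rw [sum_chains_castSucc, sum_chains_snoc_last]
  exact (Finset.sum_filter_not_add_sum_filter _ _ _).symm

end Chains

lemma lt_apply_succ_of_strictMonoOn {u : ℕ → ℕ} {k l : ℕ}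
    (hu : StrictMonoOn u (Set.Icc 1 (l + 1))) (hk₁ : 1 ≤ k) (hk₂ : k ≤ l) : u k < u (l + 1) :=
  hu ⟨hk₁, by omega⟩ ⟨by omega, le_rfl⟩ (by omega)

open scoped Classical in
/-- The paper's `(1:(m−1)) \ 𝒮_{l+1}`. -/
noncomputable def observed (u : ℕ → ℕ) (l m : ℕ) : Finset ℕ :=
  (Finset.Icc 1 (m - 1)).filter (fun i => ∀ k, 1 ≤ k → k ≤ l → u k ≠ i)

/-- The weight `w(u_{i₁},u_{i₂}) ⋯ w(u_{i_k},u_{i_{k+1}}) · w(u_{i_{k+1}},m)` of the chain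
`c = (i₁ - 1 < ⋯ < i_{k+1} - 1)`; chains index `u` from `0`, hence the shifts by one. -/
def chainWeight (w : ℕ → ℕ → ℝ) (u : ℕ → ℕ) {k l : ℕ} (c : Fin (k + 1) → Fin l) (m : ℕ) : ℝ :=
  (∏ i : Fin k, w (u ((c i.castSucc : ℕ) + 1)) (u ((c i.succ : ℕ) + 1))) *
    w (u ((c (Fin.last k) : ℕ) + 1)) m

noncomputable def headSum (w : ℕ → ℕ → ℝ) (u : ℕ → ℕ) (l m : ℕ) (f : ℕ → ℝ) : ℝ :=
  ∑ i ∈ observed u l m, w i m * f i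

noncomputable def tailSum (w : ℕ → ℕ → ℝ) (u : ℕ → ℕ) (l m : ℕ) (f : ℕ → ℕ → ℝ) : ℝ :=
  ∑ k ∈ Finset.range l, ∑ c ∈ chains (k + 1) l,
    chainWeight w u c m * headSum w u (c 0) (u ((c 0 : ℕ) + 1)) (f k)

section WeightedSums

variable {w : ℕ → ℕ → ℝ} {u : ℕ → ℕ} {k l m : ℕ}

lemma lt_of_mem_observed {i : ℕ} (hi : i ∈ observed u l m) : i < m := by
  simp only [observed, Finset.mem_filter, Finset.mem_Icc] at hi
  omega

lemma ne_of_mem_observed {i k : ℕ} (hi : i ∈ observed u l m) (hk₁ : 1 ≤ k) (hk₂ : k ≤ l) :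
    u k ≠ i := by
  simp only [observed, Finset.mem_filter] at hi
  exact hi.2 k hk₁ hk₂

lemma observed_zero : observed u 0 m = Finset.Icc 1 (m - 1) := by
  ext i
  simp only [observed, Finset.mem_filter, and_iff_left_iff_imp]
  intro _ k hk₁ hk₂
  omega

lemma observed_eq_insert (hv : u (l + 1) ∈ Finset.Icc 1 (m - 1))
    (hne : ∀ k, 1 ≤ k → k ≤ l → u k ≠ u (l + 1)) :
    observed u l m = insert (u (l + 1)) (observed u (l + 1) m) := by
  ext i
  simp only [observed, Finset.mem_insert, Finset.mem_filter]
  constructor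
  · rintro ⟨hi, hobs⟩
    by_cases hiv : i = u (l + 1)
    · exact .inl hiv
    · refine .inr ⟨hi, fun k hk₁ hk₂ => ?_⟩
      rcases Nat.lt_or_ge k (l + 1) with hk | hk
      · exact hobs k hk₁ (by omega)
      · obtain rfl : k = l + 1 := by omega
        exact Ne.symm hiv
  · rintro (rfl | ⟨hi, hobs⟩)
    · exact ⟨hv, hne⟩
    · exact ⟨hi, fun k hk₁ hk₂ => hobs k hk₁ (by omega)⟩

lemma headSum_eq_add {f : ℕ → ℝ} (hv : u (l + 1) ∈ Finset.Icc 1 (m - 1))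
    (hne : ∀ k, 1 ≤ k → k ≤ l → u k ≠ u (l + 1)) :
    headSum w u l m f = w (u (l + 1)) m * f (u (l + 1)) + headSum w u (l + 1) m f := by
  have hnotMem : u (l + 1) ∉ observed u (l + 1) m := fun h =>
    ne_of_mem_observed h (by omega) le_rfl rfl
  rw [headSum, observed_eq_insert hv hne, Finset.sum_insert hnotMem, headSum]

lemma headSum_congr {f g : ℕ → ℝ} (h : ∀ i ∈ observed u l m, f i = g i) :
    headSum w u l m f = headSum w u l m g :=
  Finset.sum_congr rfl fun i hi => by rw [h i hi]

lemma tailSum_congr {f g : ℕ → ℕ → ℝ}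
    (h : ∀ k, ∀ i < l, ∀ j ∈ observed u i (u (i + 1)), f k j = g k j) :
    tailSum w u l m f = tailSum w u l m g :=
  Finset.sum_congr rfl fun k _ => Finset.sum_congr rfl fun c _ => by
    rw [headSum_congr (h k _ (c 0).isLt)]

lemma chainWeight_castSucc (c : Fin (k + 1) → Fin l) :
    chainWeight w u (Fin.castSucc ∘ c) m = chainWeight w u c m := by
  simp only [chainWeight, Function.comp_apply, Fin.val_castSucc]

lemma chainWeight_snoc (c : Fin (k + 1) → Fin l) :
    chainWeight w u (Fin.snoc (Fin.castSucc ∘ c) (Fin.last l) : Fin (k + 2) → Fin (l + 1)) m =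
      chainWeight w u c (u (l + 1)) * w (u (l + 1)) m := by
  simp only [chainWeight, Fin.prod_univ_castSucc, Fin.succ_castSucc, Fin.snoc_castSucc,
    Fin.succ_last, Fin.snoc_last, Function.comp_apply, Fin.val_castSucc, Fin.val_last]

/-- Chains of `u 1, …, u (l+1)` either avoid `u (l+1)` or end there. -/
lemma tailSum_succ (f : ℕ → ℕ → ℝ) :
    tailSum w u (l + 1) m f =
      tailSum w u l m f + w (u (l + 1)) m *
        (headSum w u l (u (l + 1)) (f 0) + tailSum w u l (u (l + 1)) fun k => f (k + 1)) := by
  simp only [tailSum, sum_chains_succ_succ, Finset.sum_add_distrib]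
  congr 1
  · rw [Finset.sum_range_succ, chains_eq_empty (lt_add_one l), Finset.sum_empty, add_zero]
    simp only [chainWeight_castSucc, Function.comp_apply, Fin.val_castSucc]
  · rw [Finset.sum_range_succ', chains_zero, Finset.sum_singleton, add_comm, mul_add,
      Finset.mul_sum]
    congr 1
    · simp [chainWeight, Fin.snoc_zero]
    · refine Finset.sum_congr rfl fun k _ => ?_
      rw [Finset.mul_sum]
      refine Finset.sum_congr rfl fun c _ => ?_
      rw [chainWeight_snoc, ← Fin.castSucc_zero, Fin.snoc_castSucc]
      simp only [Function.comp_apply, Fin.val_castSucc]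
      ring

lemma headSum_one_add_tailSum_one
    (hnorm : ∀ m, 2 ≤ m → ∑ i ∈ Finset.Icc 1 (m - 1), w i m = 1)
    (hu : StrictMonoOn u (Set.Icc 1 l)) (hu₁ : ∀ k ∈ Set.Icc 1 l, 1 < u k) (hm : 2 ≤ m)
    (hum : ∀ k ∈ Set.Icc 1 l, u k < m) :
    headSum w u l m (fun _ => 1) + tailSum w u l m (fun _ _ => 1) = 1 := by
  induction l generalizing m with
  | zero => simp [headSum, tailSum, observed_zero, hnorm m hm]
  | succ l ih =>
    have hsub : Set.Icc 1 l ⊆ Set.Icc 1 (l + 1) := Set.Icc_subset_Icc_right (by omega)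
    have hmem : l + 1 ∈ Set.Icc 1 (l + 1) := ⟨by omega, le_rfl⟩
    have hlt (k) (hk : k ∈ Set.Icc 1 l) : u k < u (l + 1) :=
      lt_apply_succ_of_strictMonoOn hu hk.1 hk.2
    have ih' (m' : ℕ) := @ih m' (hu.mono hsub) fun k hk => hu₁ k (hsub hk)
    have hhead := headSum_eq_add (w := w) (m := m) (f := fun _ => 1)
      (Finset.mem_Icc.2 ⟨(hu₁ _ hmem).le, by have := hum _ hmem; omega⟩)
      fun k hk₁ hk₂ => (hlt k ⟨hk₁, hk₂⟩).ne
    have hm' := ih' m hm fun k hk => hum k (hsub hk)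
    rw [tailSum_succ, ih' _ (hu₁ _ hmem) hlt]
    linarith

lemma mul_headSum (a : ℝ) (f : ℕ → ℝ) :
    a * headSum w u l m f = headSum w u l m fun i => a * f i := by
  simp only [headSum, Finset.mul_sum, mul_left_comm]

lemma mul_tailSum (a : ℝ) (f : ℕ → ℕ → ℝ) :
    a * tailSum w u l m f = tailSum w u l m fun k j => a * f k j := by
  simp only [tailSum, Finset.mul_sum, mul_left_comm a, mul_headSum]

section Integral

variable {X : Type*} [MeasurableSpace X] {μ : Measure X}

lemma integrable_headSum {f : ℕ → X → ℝ} (hf : ∀ i, Integrable (f i) μ) :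
    Integrable (fun z => headSum w u l m fun i => f i z) μ :=
  integrable_finsetSum _ fun i _ => (hf i).const_mul _

lemma integral_headSum {f : ℕ → X → ℝ} (hf : ∀ i, Integrable (f i) μ) :
    ∫ z, headSum w u l m (fun i => f i z) ∂μ = headSum w u l m fun i => ∫ z, f i z ∂μ := by
  simp only [headSum]
  rw [integral_finsetSum _ fun i _ => (hf i).const_mul _]
  simp only [integral_const_mul]

lemma integrable_tailSum {f : ℕ → ℕ → X → ℝ} (hf : ∀ k j, Integrable (f k j) μ) :
    Integrable (fun z => tailSum w u l m fun k j => f k j z) μ :=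
  integrable_finsetSum _ fun k _ => integrable_finsetSum _ fun _ _ =>
    (integrable_headSum (hf k)).const_mul _

lemma integral_tailSum {f : ℕ → ℕ → X → ℝ} (hf : ∀ k j, Integrable (f k j) μ) :
    ∫ z, tailSum w u l m (fun k j => f k j z) ∂μ =
      tailSum w u l m fun k j => ∫ z, f k j z ∂μ := by
  simp only [tailSum]
  rw [integral_finsetSum _ fun k _ => integrable_finsetSum _ fun _ _ =>
    (integrable_headSum (hf k)).const_mul _]
  refine Finset.sum_congr rfl fun k _ => ?_
  rw [integral_finsetSum _ fun _ _ => (integrable_headSum (hf k)).const_mul _]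
  simp only [integral_const_mul, integral_headSum (hf k)]

end Integral

end WeightedSums

/-- The closed form of the density, in which a chain of `k` missing points carries the
bandwidth `b k`. -/
noncomputable def kernelMix (w : ℕ → ℕ → ℝ) (u : ℕ → ℕ) (b : ℕ → ℝ × ℝ) (l m : ℕ)
    (σ : ℕ → ℝ × ℝ) (s : ℝ × ℝ) : ℝ :=
  headSum w u l m (fun i => kernel2 (s - σ i) (b 0)) +
    tailSum w u l m fun k j => kernel2 (s - σ j) (b (k + 1))

section KernelMix

variable {w : ℕ → ℕ → ℝ} {u : ℕ → ℕ} {a : ℝ × ℝ} {b : ℕ → ℝ × ℝ} {l m : ℕ}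
  {σ : ℕ → ℝ × ℝ}

lemma integrable_kernelMix (hb : ∀ k, 0 < (b k).1 ∧ 0 < (b k).2) :
    Integrable fun z => kernelMix w u b l m σ z :=
  (integrable_headSum fun i => integrable_kernel2 (hb 0).1 (hb 0).2 (σ i)).add
    (integrable_tailSum fun k j => integrable_kernel2 (hb (k + 1)).1 (hb (k + 1)).2 (σ j))

lemma integral_kernelMix (hb : ∀ k, 0 < (b k).1 ∧ 0 < (b k).2) :
    ∫ z, kernelMix w u b l m σ z =
      headSum w u l m (fun _ => 1) + tailSum w u l m fun _ _ => 1 := by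
  have hmass (k : ℕ) (p : ℝ × ℝ) : ∫ z, kernel2 (z - p) (b k) = 1 :=
    integral_kernel2 (hb k).1 (hb k).2 p
  simp only [kernelMix]
  rw [integral_add (integrable_headSum fun i => integrable_kernel2 (hb 0).1 (hb 0).2 (σ i))
      (integrable_tailSum fun k j => integrable_kernel2 (hb (k + 1)).1 (hb (k + 1)).2 (σ j)),
    integral_headSum fun i => integrable_kernel2 (hb 0).1 (hb 0).2 (σ i),
    integral_tailSum fun k j => integrable_kernel2 (hb (k + 1)).1 (hb (k + 1)).2 (σ j)]
  simp only [hmass]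

lemma integrable_kernel2_mul_kernelMix (ha₁ : 0 < a.1) (ha₂ : 0 < a.2)
    (hb : ∀ k, 0 < (b k).1 ∧ 0 < (b k).2) (s : ℝ × ℝ) :
    Integrable fun z => kernel2 (s - z) a * kernelMix w u b l m σ z := by
  simp only [kernelMix, mul_add, mul_headSum, mul_tailSum]
  exact (integrable_headSum fun i =>
      integrable_kernel2_mul_kernel2 ha₁ ha₂ (hb 0).1 (hb 0).2 s (σ i)).add
    (integrable_tailSum fun k j =>
      integrable_kernel2_mul_kernel2 ha₁ ha₂ (hb (k + 1)).1 (hb (k + 1)).2 s (σ j))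

lemma integral_kernel2_mul_kernelMix (ha₁ : 0 < a.1) (ha₂ : 0 < a.2)
    (hb : ∀ k, 0 < (b k).1 ∧ 0 < (b k).2) (s : ℝ × ℝ) :
    ∫ z, kernel2 (s - z) a * kernelMix w u b l m σ z =
      kernelMix w u (fun k => convBandwidth a (b k)) l m σ s := by
  have hconv (k : ℕ) (p : ℝ × ℝ) :
      ∫ z, kernel2 (s - z) a * kernel2 (z - p) (b k) = kernel2 (s - p) (convBandwidth a (b k)) :=
    integral_kernel2_mul_kernel2 ha₁ ha₂ (hb k).1 (hb k).2 s p
  have hint (k : ℕ) (p : ℝ × ℝ) :=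
    integrable_kernel2_mul_kernel2 ha₁ ha₂ (hb k).1 (hb k).2 s p
  simp only [kernelMix, mul_add, mul_headSum, mul_tailSum]
  rw [integral_add (integrable_headSum fun i => hint 0 (σ i))
      (integrable_tailSum fun k j => hint (k + 1) (σ j)),
    integral_headSum fun i => hint 0 (σ i), integral_tailSum fun k j => hint (k + 1) (σ j)]
  simp only [hconv]

lemma kernelMix_succ (s : ℝ × ℝ) :
    kernelMix w u b (l + 1) m σ s =
      (headSum w u (l + 1) m (fun i => kernel2 (s - σ i) (b 0)) +
          tailSum w u l m fun k j => kernel2 (s - σ j) (b (k + 1))) +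
        w (u (l + 1)) m * kernelMix w u (fun k => b (k + 1)) l (u (l + 1)) σ s := by
  rw [kernelMix, tailSum_succ, kernelMix]
  ring

lemma kernelMix_update (hu : StrictMonoOn u (Set.Icc 1 (l + 1))) (hv : 1 ≤ u (l + 1))
    (hvm : u (l + 1) < m) (z s : ℝ × ℝ) :
    kernelMix w u b l m (Function.update σ (u (l + 1)) z) s =
      (headSum w u (l + 1) m (fun i => kernel2 (s - σ i) (b 0)) +
          tailSum w u l m fun k j => kernel2 (s - σ j) (b (k + 1))) +
        w (u (l + 1)) m * kernel2 (s - z) (b 0) := by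
  rw [kernelMix, headSum_eq_add (Finset.mem_Icc.2 ⟨hv, by omega⟩) fun k hk₁ hk₂ =>
      (lt_apply_succ_of_strictMonoOn hu hk₁ hk₂).ne, Function.update_self,
    headSum_congr (g := fun i => kernel2 (s - σ i) (b 0)) fun i hi => by
      rw [Function.update_of_ne (ne_of_mem_observed hi (by omega) le_rfl).symm],
    tailSum_congr (g := fun k j => kernel2 (s - σ j) (b (k + 1))) fun k i hi j hj => by
      rw [Function.update_of_ne ((lt_of_mem_observed hj).trans
        (lt_apply_succ_of_strictMonoOn hu (by omega) hi)).ne]]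
  ring

end KernelMix

theorem condDens_eq_kernelMix {w : ℕ → ℕ → ℝ} {u : ℕ → ℕ} {hb : ℝ × ℝ} {l m : ℕ}
    (hnorm : ∀ m, 2 ≤ m → ∑ i ∈ Finset.Icc 1 (m - 1), w i m = 1)
    (hb₁ : 0 < hb.1) (hb₂ : 0 < hb.2) (hu : StrictMonoOn u (Set.Icc 1 l))
    (hu₁ : ∀ k ∈ Set.Icc 1 l, 1 < u k) (hum : ∀ k ∈ Set.Icc 1 l, u k < m)
    (σ : ℕ → ℝ × ℝ) (s : ℝ × ℝ) :
    condDens w hb u l σ m s = kernelMix w u (scaledBandwidth hb) l m σ s := by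
  have hbw := scaledBandwidth_pos hb₁ hb₂
  induction l generalizing m σ s with
  | zero => simp [condDens, kernelMix, headSum, tailSum, observed_zero, scaledBandwidth_zero]
  | succ l ih =>
    have hsub : Set.Icc 1 l ⊆ Set.Icc 1 (l + 1) := Set.Icc_subset_Icc_right (by omega)
    have hmem : l + 1 ∈ Set.Icc 1 (l + 1) := ⟨by omega, le_rfl⟩
    have hlt (k) (hk : k ∈ Set.Icc 1 l) : u k < u (l + 1) :=
      lt_apply_succ_of_strictMonoOn hu hk.1 hk.2
    have ih' (m' : ℕ) := @ih m' (hu.mono hsub) fun k hk => hu₁ k (hsub hk)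
    have hmass := headSum_one_add_tailSum_one hnorm (hu.mono hsub)
      (fun k hk => hu₁ k (hsub hk)) (hu₁ _ hmem) hlt
    obtain ⟨A, hupd, hsucc⟩ : ∃ A,
        (∀ z, kernelMix w u (scaledBandwidth hb) l m (Function.update σ (u (l + 1)) z) s =
          A + w (u (l + 1)) m * kernel2 (s - z) hb) ∧
        kernelMix w u (scaledBandwidth hb) (l + 1) m σ s =
          A + w (u (l + 1)) m *
            kernelMix w u (fun k => scaledBandwidth hb (k + 1)) l (u (l + 1)) σ s :=
      ⟨_, fun z => by rw [kernelMix_update hu (hu₁ _ hmem).le (hum _ hmem), scaledBandwidth_zero],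
        kernelMix_succ s⟩
    calc condDens w hb u (l + 1) σ m s
        = ∫ z, A * kernelMix w u (scaledBandwidth hb) l (u (l + 1)) σ z +
            w (u (l + 1)) m *
              (kernel2 (s - z) hb * kernelMix w u (scaledBandwidth hb) l (u (l + 1)) σ z) := by
          simp only [condDens, ih' m fun k hk => hum k (hsub hk), ih' _ hlt, hupd, add_mul,
            mul_assoc]
      _ = A * (headSum w u l (u (l + 1)) (fun _ => 1) + tailSum w u l (u (l + 1)) fun _ _ => 1) +
            w (u (l + 1)) m * kernelMix w u (fun k => convBandwidth hb (scaledBandwidth hb k)) l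
              (u (l + 1)) σ s := by
          rw [integral_add ((integrable_kernelMix hbw).const_mul _)
              ((integrable_kernel2_mul_kernelMix hb₁ hb₂ hbw s).const_mul _),
            integral_const_mul, integral_const_mul, integral_kernelMix hbw,
            integral_kernel2_mul_kernelMix hb₁ hb₂ hbw]
      _ = kernelMix w u (scaledBandwidth hb) (l + 1) m σ s := by
          simp only [hmass, mul_one, hsucc, convBandwidth_scaledBandwidth hb₁.le hb₂.le]

-- An increasing tuple `i₁ < ⋯ < i_m` is a strictly monotone `c : Fin (m' + 1) → Fin L` with
-- `m = m' + 1` and `c j = i_{j+1} - 1`, so the bandwidth `√(m+1)·h̲` reads `√(m'+2)·h̲`.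
open scoped Classical in
theorem prop1_general_general (w : ℕ → ℕ → ℝ) (u : ℕ → ℕ) (σ : ℕ → ℝ × ℝ) (L n : ℕ)
    (h δlon δlat : ℝ) (hh : 0 < h) (hδlon : 0 < δlon) (hδlat : 0 < δlat)
    (hu1 : ∀ k, 1 ≤ k → k ≤ L → 1 < u k)
    (humono : ∀ k, 1 ≤ k → k < L → u k < u (k + 1))
    (hun : ∀ k, 1 ≤ k → k ≤ L → u k ≤ n)
    (hnorm : ∀ m, 2 ≤ m → ∑ i ∈ Finset.Icc 1 (m - 1), w i m = 1)
    (s : ℝ × ℝ) :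
    condDens w (h * δlon, h * δlat) u L σ (n + 1) s =
      (∑ i ∈ (Finset.Icc 1 n).filter (fun i => ∀ k, 1 ≤ k → k ≤ L → u k ≠ i),
          w i (n + 1) * kernel2 (s - σ i) (h * δlon, h * δlat)) +
        ∑ m ∈ Finset.range L,
          ∑ c ∈ Finset.univ.filter (fun c : Fin (m + 1) → Fin L => StrictMono c),
            (∏ k : Fin m, w (u ((c k.castSucc).val + 1)) (u ((c k.succ).val + 1))) *
              w (u ((c (Fin.last m)).val + 1)) (n + 1) *
              ∑ j ∈ (Finset.Icc 1 (u ((c 0).val + 1) - 1)).filter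
                  (fun j => ∀ k, 1 ≤ k → k ≤ (c 0).val → u k ≠ j),
                w j (u ((c 0).val + 1)) *
                  kernel2 (s - σ j)
                    (Real.sqrt ((m : ℝ) + 2) * (h * δlon),
                      Real.sqrt ((m : ℝ) + 2) * (h * δlat)) := by
  have hu : StrictMonoOn u (Set.Icc 1 L) :=
    strictMonoOn_of_lt_succ Set.ordConnected_Icc fun k _ hk hk' => by
      rw [Order.succ_eq_add_one] at hk' ⊢
      exact humono k hk.1 (by simp only [Set.mem_Icc] at hk'; omega)
  have hbw (k : ℕ) : scaledBandwidth (h * δlon, h * δlat) (k + 1) =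
      (√((k : ℝ) + 2) * (h * δlon), √((k : ℝ) + 2) * (h * δlat)) := by
    simp only [scaledBandwidth, Nat.cast_add, Nat.cast_one, add_assoc, one_add_one_eq_two]
    rfl
  rw [condDens_eq_kernelMix hnorm (mul_pos hh hδlon) (mul_pos hh hδlat) hu
    (fun k hk => hu1 k hk.1 hk.2) (fun k hk => Nat.lt_succ_of_le (hun k hk.1 hk.2)),
    kernelMix, scaledBandwidth_zero]
  simp only [hbw]
  rfl

open scoped Classical in
/-- Proposition 1 (general closed form with `L` missing points): with
`𝒮₁ = ∅, 𝒮₂ = {u₁}, …, 𝒮_{L+1} = {u₁,…,u_L}`, the density of `s_{n+1}` conditional on the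
observed data `s_{(1:n)\𝒮_{L+1}}` (obtained by integrating out `s_{u₁},…,s_{u_L}`) equals
`Σ_{i∈(1:n)\𝒮_{L+1}} w_θ(i,n+1) κ₂(s − sᵢ, h̲)
 + Σ_{m=1}^{L} Σ_{1≤i₁<⋯<i_m≤L} w_θ(u_{i₁},u_{i₂})⋯w_θ(u_{i_{m−1}},u_{i_m})·w_θ(u_{i_m},n+1)
     · Σ_{j∈(1:u_{i₁}−1)\𝒮_{i₁}} w_θ(j,u_{i₁}) κ₂(s − s_j, √(m+1)·h̲)`.
(Increasing `m`-tuples are encoded as strictly monotone maps `c : Fin (m'+1) → Fin L`, with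
tuple length `m'+1` ranging over `1,…,L` and kernel bandwidth `√(m'+2)·h̲ = √((m'+1)+1)·h̲`.) -/
theorem prop1_general (w : ℕ → ℕ → ℝ) (u : ℕ → ℕ) (σ : ℕ → ℝ × ℝ) (L n : ℕ)
    (h δlon δlat : ℝ) (hh : 0 < h) (hδlon : 0 < δlon) (hδlat : 0 < δlat)
    (hn : 1 ≤ n)
    (hu1 : ∀ k, 1 ≤ k → k ≤ L → 1 < u k)
    (humono : ∀ k, 1 ≤ k → k < L → u k < u (k + 1))
    (hun : ∀ k, 1 ≤ k → k ≤ L → u k ≤ n)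
    (hw : ∀ i m, 0 ≤ w i m)
    (hnorm : ∀ m, 2 ≤ m → ∑ i ∈ Finset.Icc 1 (m - 1), w i m = 1)
    (s : ℝ × ℝ) :
    condDens w (h * δlon, h * δlat) u L σ (n + 1) s =
      (∑ i ∈ (Finset.Icc 1 n).filter (fun i => ∀ k, 1 ≤ k → k ≤ L → u k ≠ i),
          w i (n + 1) * kernel2 (s - σ i) (h * δlon, h * δlat)) +
        ∑ m ∈ Finset.range L,
          ∑ c ∈ Finset.univ.filter (fun c : Fin (m + 1) → Fin L => StrictMono c),
            (∏ k : Fin m, w (u ((c k.castSucc).val + 1)) (u ((c k.succ).val + 1))) *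
              w (u ((c (Fin.last m)).val + 1)) (n + 1) *
              ∑ j ∈ (Finset.Icc 1 (u ((c 0).val + 1) - 1)).filter
                  (fun j => ∀ k, 1 ≤ k → k ≤ (c 0).val → u k ≠ j),
                w j (u ((c 0).val + 1)) *
                  kernel2 (s - σ j)
                    (Real.sqrt ((m : ℝ) + 2) * (h * δlon),
                      Real.sqrt ((m : ℝ) + 2) * (h * δlat)) :=
  prop1_general_general w u σ L n h δlon δlat hh hδlon hδlat hu1 humono hun hnorm s
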